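/- Let n ≥ 2 and i ∈ [n−1]. The image of the map inv_i on the subgroup S_n of B_n is exactly the set {0, 1, ..., n−i}. -/
import Mathlib


/-- A signed permutation `π` of `[n]`: `π(i) = ε i · σ(i)` with `σ` a permutation
of `[n]` and signs `ε i ∈ {±1}`.  Positions are encoded by `Fin n`
(position `i ∈ [n]` corresponds to `⟨i-1, _⟩ : Fin n`). -/
structure SignedPerm (n : ℕ) where
  σ : Equiv.Perm (Fin n)
  ε : Fin n → ℤ
  hε : ∀ i, ε i = 1 ∨ ε i = -1

namespace SignedPerm

variable {n : ℕ}

/-- The signed value `π(i) = ε i · σ(i) ∈ {-n, …, -1, 1, …, n}` (1-based value). -/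
def val (π : SignedPerm n) (i : Fin n) : ℤ :=
  π.ε i * ((π.σ i : ℕ) + 1)

/-- The standard basis vector `e i` of `ℝ^n`. -/
def e (i : Fin n) : Fin n → ℝ := Pi.single i 1

/-- The action of a signed permutation on `ℝ^n`, determined by
`π · e i = ε i · e (σ i)`. -/
def act (π : SignedPerm n) (v : Fin n → ℝ) : Fin n → ℝ :=
  fun j => (π.ε (π.σ.symm j) : ℝ) * v (π.σ.symm j)

/-- The positive root system `Φₙ⁺ = {e k, e i + e j, e i - e j : k, i < j}` of `Bₙ`. -/
def PhiPos (n : ℕ) : Set (Fin n → ℝ) :=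
  {v | (∃ k : Fin n, v = e k) ∨ ∃ i j : Fin n, i < j ∧ (v = e i + e j ∨ v = e i - e j)}

/-- The positive roots `Φₙ,ᵢ⁺ = {e i, e i + e j, e i - e j : i < j ≤ n}`. -/
def PhiPosI (n : ℕ) (i : Fin n) : Set (Fin n → ℝ) :=
  {v | v = e i ∨ ∃ j : Fin n, i < j ∧ (v = e i + e j ∨ v = e i - e j)}

/-- The `i`-inversion number `invᵢ π = #{v ∈ Φₙ,ᵢ⁺ : π · v ∈ -Φₙ⁺}`. -/
noncomputable def invi (i : Fin n) (π : SignedPerm n) : ℕ :=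
  Set.ncard {v | v ∈ PhiPosI n i ∧ -(π.act v) ∈ PhiPos n}

/-- The inversion number `inv π = #{v ∈ Φₙ⁺ : π · v ∈ -Φₙ⁺}`. -/
noncomputable def inv (π : SignedPerm n) : ℕ :=
  Set.ncard {v | v ∈ PhiPos n ∧ -(π.act v) ∈ PhiPos n}

lemma e_apply (i j : Fin n) : e i j = if j = i then (1:ℝ) else 0 := by
  simp [e, Pi.single_apply]

lemma e_injective : Function.Injective (e (n := n)) := by
  intro a b h
  have h1 := congrFun h a
  rw [e_apply, e_apply, if_pos rfl] at h1
  split_ifs at h1 with hab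
  · exact hab
  · norm_num at h1

lemma exists_coord_one {v : Fin n → ℝ} (hv : v ∈ PhiPos n) : ∃ x, v x = 1 := by
  rcases hv with ⟨k, rfl⟩ | ⟨a, b, hab, rfl | rfl⟩
  · exact ⟨k, by simp [e_apply]⟩
  · exact ⟨a, by simp [e_apply, hab.ne]⟩
  · exact ⟨a, by simp [e_apply, hab.ne]⟩

lemma nonpos_notMem {v : Fin n → ℝ} (h : ∀ x, v x ≤ 0) : v ∉ PhiPos n := by
  intro hv
  obtain ⟨x, hx⟩ := exists_coord_one hv
  linarith [h x]

lemma sub_mem_phiPos {a b : Fin n} : e a - e b ∈ PhiPos n ↔ a < b := by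
  constructor
  · intro h
    rcases eq_or_ne a b with rfl | hab
    · exfalso
      obtain ⟨x, hx⟩ := exists_coord_one h
      simp [e_apply] at hx
    rcases h with ⟨k, hk⟩ | ⟨x, y, hxy, h | h⟩
    · have h2 := congrFun hk b
      simp only [Pi.sub_apply, e_apply] at h2
      rw [if_neg (Ne.symm hab)] at h2
      simp only [if_true] at h2
      split_ifs at h2 <;> norm_num at h2
    · have h2 := congrFun h b
      simp only [Pi.sub_apply, Pi.add_apply, e_apply] at h2
      rw [if_neg (Ne.symm hab)] at h2
      simp only [if_true] at h2
      split_ifs at h2 <;> norm_num at h2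
    · have ha := congrFun h a
      have hb := congrFun h b
      simp only [Pi.sub_apply, e_apply] at ha hb
      rw [if_neg hab] at ha
      rw [if_neg (Ne.symm hab)] at hb
      simp only [if_true] at ha hb
      have hax : a = x := by
        by_contra hax
        rw [if_neg hax] at ha
        split_ifs at ha <;> norm_num at ha
      have hby : b = y := by
        by_contra hby
        rw [if_neg hby] at hb
        split_ifs at hb <;> norm_num at hb
      exact hax ▸ hby ▸ hxy
  · intro h
    exact Or.inr ⟨a, b, h, Or.inr rfl⟩

lemma act_e (π : SignedPerm n) (hε : ∀ j, π.ε j = 1) (k : Fin n) :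
    π.act (e k) = e (π.σ k) := by
  funext j
  simp [act, e_apply, hε, Equiv.symm_apply_eq]

lemma act_add (π : SignedPerm n) (v w : Fin n → ℝ) :
    π.act (v + w) = π.act v + π.act w := by
  funext j; simp [act, mul_add]

lemma act_sub (π : SignedPerm n) (v w : Fin n → ℝ) :
    π.act (v - w) = π.act v - π.act w := by
  funext j; simp [act, mul_sub]

lemma invi_eq_card (π : SignedPerm n) (hε : ∀ j, π.ε j = 1) (i : Fin n) :
    invi i π = (Finset.univ.filter (fun j => i < j ∧ π.σ j < π.σ i)).card := by
  have hset : {v | v ∈ PhiPosI n i ∧ -(π.act v) ∈ PhiPos n}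
      = (fun j => e i - e j) '' {j | i < j ∧ π.σ j < π.σ i} := by
    ext v
    constructor
    · rintro ⟨h1, h2⟩
      rcases h1 with rfl | ⟨j, hij, rfl | rfl⟩
      · exfalso
        rw [act_e π hε] at h2
        refine nonpos_notMem (fun x => ?_) h2
        simp [e_apply]
        split_ifs <;> norm_num
      · exfalso
        rw [act_add, act_e π hε, act_e π hε] at h2
        refine nonpos_notMem (fun x => ?_) h2
        simp [e_apply]
        split_ifs <;> norm_num
      · refine ⟨j, ⟨hij, ?_⟩, rfl⟩
        rw [act_sub, act_e π hε, act_e π hε, neg_sub] at h2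
        exact sub_mem_phiPos.mp h2
    · rintro ⟨j, ⟨hij, hσ⟩, rfl⟩
      refine ⟨Or.inr ⟨j, hij, Or.inr rfl⟩, ?_⟩
      rw [act_sub, act_e π hε, act_e π hε, neg_sub]
      exact sub_mem_phiPos.mpr hσ
  rw [invi, hset, Set.ncard_image_of_injOn]
  · have : {j : Fin n | i < j ∧ π.σ j < π.σ i}
        = ↑(Finset.univ.filter (fun j => i < j ∧ π.σ j < π.σ i)) := by
      ext j; simp
    rw [this, Set.ncard_coe_finset]
  · intro a _ b _ hab
    have h2 : e a = e b := by
      funext x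
      have h3 := congrFun hab x
      simp only [Pi.sub_apply] at h3
      linarith
    exact e_injective h2

end SignedPerm

open SignedPerm in
/-- For `i ∈ [n-1]`, the image of `invᵢ` on the subgroup
`Sₙ ⊆ Bₙ` (all signs positive) is exactly `{0, 1, …, n-i}`
(position `i ∈ [n-1]` is `i.val + 1` in 1-based indexing). -/
theorem invi_image_S (n : ℕ) (hn : 2 ≤ n) (i : Fin n) (hi : i.val + 1 ≤ n - 1) :
    (fun π : SignedPerm n => invi i π) '' {π : SignedPerm n | ∀ j, π.ε j = 1}
      = {m : ℕ | m ≤ n - (i.val + 1)} := by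
  ext m
  simp only [Set.mem_image, Set.mem_setOf_eq]
  constructor
  · rintro ⟨π, hπ, rfl⟩
    rw [invi_eq_card π hπ i]
    have hsub : (Finset.univ.filter (fun j => i < j ∧ π.σ j < π.σ i))
        ⊆ Finset.Ioi i := by
      intro j hj
      simp only [Finset.mem_filter] at hj
      simpa using hj.2.1
    have := Finset.card_le_card hsub
    rw [Fin.card_Ioi] at this
    omega
  · intro hm
    have ht : i.val + m < n := by omega
    set t : Fin n := ⟨i.val + m, ht⟩ with htdef
    refine ⟨⟨Equiv.swap i t, fun _ => 1, fun _ => Or.inl rfl⟩, fun j => rfl, ?_⟩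
    rw [invi_eq_card _ (fun _ => rfl) i]
    have hfil : (Finset.univ.filter
        (fun j => i < j ∧ Equiv.swap i t j < Equiv.swap i t i)) = Finset.Ioc i t := by
      ext j
      simp only [Finset.mem_filter, Finset.mem_univ, true_and, Finset.mem_Ioc,
        Equiv.swap_apply_left]
      constructor
      · rintro ⟨hij, hlt⟩
        refine ⟨hij, ?_⟩
        rcases eq_or_ne j t with rfl | hjt
        · exact le_refl _
        · rcases eq_or_ne j i with rfl | hji
          · exact absurd rfl hij.ne'
          · rw [Equiv.swap_apply_of_ne_of_ne hji hjt] at hlt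
            exact hlt.le
      · rintro ⟨hij, hjt⟩
        refine ⟨hij, ?_⟩
        rcases eq_or_ne j t with rfl | hjt'
        · rw [Equiv.swap_apply_right]
          exact hij
        · rw [Equiv.swap_apply_of_ne_of_ne hij.ne' hjt']
          exact lt_of_le_of_ne hjt hjt'
    rw [hfil, Fin.card_Ioc]
    simp [htdef]
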